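/- arXiv:2405.05119 — 2 statements merged into one kernel-verified Lean document; each statement's English description precedes it below -/
import Mathlib

section
/- Fix integers β ≥ 1 and n, and reals p ∈ (0,1], q ∈ [p,1] such that pn/q and tpn/β (for t = 0,…,β) are integers. Suppose Stage 1 draws U as a uniformly random subset of [n] of size (p/q)n, and Stage 2, conditional on U, assigns each z^t to have its treated set a uniformly random subset of U of size tpn/β (units outside U untreated). Then E[ TTE-hat ] − TTE = (1/n) Σ_{i=1}^{n} Σ_{∅ ≠ S ⊆ N_i, |S| ≤ β} c_{i,S} · ( (q/p)·[ (p/q)n / n ]_{|S|} − 1 ). -/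
open Finset

/-- The Lagrange rollout coefficients
`h_{t,q} = ∏_{s=0,s≠t}^{β} ((β/q − s)/(t − s)) − ∏_{s=0,s≠t}^{β} ((−s)/(t − s))`. -/
noncomputable def hcoef (β : ℕ) (q : ℝ) (t : ℕ) : ℝ :=
  (∏ s ∈ (Finset.range (β + 1)).erase t, (((β : ℝ) / q - (s : ℝ)) / ((t : ℝ) - (s : ℝ)))) -
  (∏ s ∈ (Finset.range (β + 1)).erase t, ((-(s : ℝ)) / ((t : ℝ) - (s : ℝ))))

/-- The falling-ratio bracket `[k/N]_m = ∏_{i=0}^{m−1} (k−i)/(N−i)`. -/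
noncomputable def brak (k N : ℝ) (m : ℕ) : ℝ :=
  ∏ i ∈ Finset.range m, (k - (i : ℝ)) / (N - (i : ℝ))

/-!
Under the two-stage design the treated set `Z t` is marginally a uniformly random
`m_t`-subset of `[n]` (an `m_t`-set lies in `C(n - m_t, u - m_t)` of the `u`-sets `U`), so
`E[∏_{j ∈ S} z^t_j] = [m_t/n]_{|S|}`. Since `m_t` is linear in `t`, this is a polynomial of
degree `|S| ≤ β` in `t`; the coefficients `h_{t,q}` are differences of Lagrange weights at the
nodes `0, …, β`, so `Σ_t h_{t,q} [m_t/n]_{|S|}` is its value at `t = β/q`, where `m_t` becomes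
`u = pn/q`, minus its value at `t = 0`, which vanishes unless `S = ∅`.
-/

section Brak

open Polynomial

lemma brak_eq_eval_div_eval (k N : ℝ) (m : ℕ) :
    brak k N m = (descPochhammer ℝ m).eval k / (descPochhammer ℝ m).eval N := by
  simp only [brak, descPochhammer_eval_eq_prod_range, prod_div_distrib]

lemma brak_natCast (a n k : ℕ) : brak a n k = (a.choose k : ℝ) / n.choose k := by
  simp only [brak_eq_eval_div_eval, descPochhammer_eval_eq_descFactorial,
    Nat.descFactorial_eq_factorial_mul_choose, Nat.cast_mul]
  exact mul_div_mul_left _ _ (Nat.cast_ne_zero.2 k.factorial_ne_zero)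

lemma brak_zero (k N : ℝ) : brak k N 0 = 1 := prod_range_zero _

lemma brak_zero_left (N : ℝ) {m : ℕ} (hm : m ≠ 0) : brak 0 N m = 0 :=
  prod_eq_zero (mem_range.2 (Nat.pos_of_ne_zero hm)) (by simp)

lemma sum_powerset_filter_mul_sub_brak_zero {α : Type*} (s : Finset α) (β : ℕ)
    (c : Finset α → ℝ) (k N : ℝ) :
    ∑ S ∈ s.powerset.filter (fun S => S.card ≤ β), c S * (brak k N S.card - brak 0 N S.card) =
      ∑ S ∈ s.powerset.filter (fun S => S.Nonempty ∧ S.card ≤ β), c S * brak k N S.card := by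
  rw [sum_filter, sum_filter]
  refine sum_congr rfl fun S _ => ?_
  rcases S.eq_empty_or_nonempty with rfl | hS
  · simp [brak_zero]
  · simp [hS, brak_zero_left _ hS.card_pos.ne']

end Brak

section Interpolation

open Polynomial

lemma sum_lagrange_mul_eval (β : ℕ) (x : ℝ) {P : ℝ[X]} (hP : P.natDegree ≤ β) :
    ∑ t ∈ range (β + 1), (∏ s ∈ (range (β + 1)).erase t, (x - s) / (t - s)) * P.eval (t : ℝ) =
      P.eval x := by
  have hinj : Set.InjOn (Nat.cast : ℕ → ℝ) (range (β + 1)) := Nat.cast_injective.injOn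
  have hdeg : P.degree < #(range (β + 1)) := by
    rw [card_range]
    exact degree_le_natDegree.trans_lt (by exact_mod_cast Nat.lt_succ_of_le hP)
  conv_rhs => rw [Lagrange.eq_interpolate hinj hdeg]
  rw [Lagrange.interpolate_apply, eval_finsetSum]
  refine sum_congr rfl fun t _ => ?_
  simp only [eval_mul, eval_C, Lagrange.basis, eval_prod, Lagrange.basisDivisor, eval_sub,
    eval_X, div_eq_inv_mul]
  ring

lemma sum_hcoef_mul_eval (β : ℕ) (q : ℝ) {P : ℝ[X]} (hP : P.natDegree ≤ β) :
    ∑ t ∈ range (β + 1), hcoef β q t * P.eval (t : ℝ) = P.eval (β / q) - P.eval 0 := by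
  rw [← sum_lagrange_mul_eval β _ hP, ← sum_lagrange_mul_eval β 0 hP, ← sum_sub_distrib]
  simp only [hcoef, sub_mul, zero_sub]

lemma sum_hcoef_mul_brak {β k : ℕ} (hβ : β ≠ 0) (hk : k ≤ β) (q a N : ℝ) :
    ∑ t ∈ range (β + 1), hcoef β q t * brak (t * a / β) N k =
      brak (a / q) N k - brak 0 N k := by
  set P : ℝ[X] :=
    (descPochhammer ℝ k).comp (C (a / β) * X) * C ((descPochhammer ℝ k).eval N)⁻¹
  have hP : P.natDegree ≤ β :=
    calc P.natDegree ≤ ((descPochhammer ℝ k).comp (C (a / β) * X)).natDegree :=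
          natDegree_mul_C_le _ _
      _ ≤ k * 1 := natDegree_comp_le.trans <| Nat.mul_le_mul (descPochhammer_natDegree ℝ k).le
          ((natDegree_C_mul_le _ _).trans natDegree_X_le)
      _ ≤ β := by rwa [mul_one]
  have heval : ∀ y, P.eval y = brak (a / β * y) N k := by
    simp [P, brak_eq_eval_div_eval, eval_comp, div_eq_mul_inv]
  have hβ' : (β : ℝ) ≠ 0 := Nat.cast_ne_zero.2 hβ
  convert sum_hcoef_mul_eval β q hP using 1
  · refine sum_congr rfl fun t _ => ?_
    rw [heval, mul_comm (a / (β : ℝ)), mul_div_assoc]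
  · rw [heval, heval, mul_zero, div_mul_div_cancel₀ hβ']

end Interpolation

lemma card_filter_powersetCard_subset_mul_choose {α : Type*} [DecidableEq α] {s t : Finset α}
    (hst : s ⊆ t) (m : ℕ) :
    #((t.powersetCard m).filter (s ⊆ ·)) * (#t).choose #s = (#t).choose m * m.choose #s := by
  rcases le_or_gt #s m with hsm | hms
  · rw [card_filter_powersetCard_subset s t m hst hsm, Nat.choose_mul hsm, mul_comm]
  · rw [Nat.choose_eq_zero_of_lt hms, filter_false_of_mem fun A hA hsA =>
      (card_le_card hsA).not_gt (by rwa [(mem_powersetCard.1 hA).2]), card_empty]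
    simp

section RandomSubsets

variable {α Ω : Type*} [Fintype α] [DecidableEq α] [Fintype Ω] (w : Ω → ℝ)

lemma sum_filter_subset_eq_sum_sum_filter_eq (X : Ω → Finset α) (S : Finset α) :
    ∑ ω ∈ univ.filter (fun ω => S ⊆ X ω), w ω =
      ∑ A ∈ univ.filter (S ⊆ ·), ∑ ω ∈ univ.filter (fun ω => X ω = A), w ω := by
  rw [sum_fiberwise_eq_sum_filter]
  simp

lemma sum_filter_subset_eq_choose_div_choose {m : ℕ} (hm : m ≤ Fintype.card α)
    (X : Ω → Finset α) (hXcard : ∀ ω, (X ω).card = m)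
    (hXunif : ∀ A : Finset α, A.card = m →
      ∑ ω ∈ univ.filter (fun ω => X ω = A), w ω = 1 / ((Fintype.card α).choose m : ℝ))
    (S : Finset α) :
    ∑ ω ∈ univ.filter (fun ω => S ⊆ X ω), w ω =
      (m.choose S.card : ℝ) / (Fintype.card α).choose S.card := by
  have hprob : ∀ A : Finset α, ∑ ω ∈ univ.filter (fun ω => X ω = A), w ω =
      if A ∈ univ.powersetCard m then 1 / ((Fintype.card α).choose m : ℝ) else 0 := by
    intro A
    split_ifs with hA
    · exact hXunif A (mem_powersetCard.1 hA).2
    · refine sum_eq_zero fun ω hω => absurd ?_ hA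
      rw [← (mem_filter.1 hω).2]
      exact mem_powersetCard.2 ⟨subset_univ _, hXcard ω⟩
  have hcount := card_filter_powersetCard_subset_mul_choose (subset_univ S) m
  rw [card_univ] at hcount
  have hn : ((Fintype.card α).choose m : ℝ) ≠ 0 := Nat.cast_ne_zero.2 (Nat.choose_pos hm).ne'
  have hk : ((Fintype.card α).choose S.card : ℝ) ≠ 0 :=
    Nat.cast_ne_zero.2 (Nat.choose_pos (card_le_univ S)).ne'
  rw [sum_filter_subset_eq_sum_sum_filter_eq, sum_congr rfl fun A _ => hprob A, sum_ite_mem,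
    sum_const, nsmul_eq_mul, filter_inter, univ_inter, mul_one_div, div_eq_div_iff hn hk]
  exact_mod_cast hcount.trans (mul_comm _ _)

lemma sum_filter_eq_one_div_choose_of_two_stage {u m : ℕ} (hmu : m ≤ u)
    (hun : u ≤ Fintype.card α) (U Z : Ω → Finset α) (hUcard : ∀ ω, (U ω).card = u)
    (hUunif : ∀ V : Finset α, V.card = u →
      ∑ ω ∈ univ.filter (fun ω => U ω = V), w ω = 1 / ((Fintype.card α).choose u : ℝ))
    (hZU : ∀ ω, Z ω ⊆ U ω)
    (hZunif : ∀ V A : Finset α, A ⊆ V → A.card = m →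
      ∑ ω ∈ univ.filter (fun ω => U ω = V ∧ Z ω = A), w ω =
        (1 / (u.choose m : ℝ)) * ∑ ω ∈ univ.filter (fun ω => U ω = V), w ω)
    (A : Finset α) (hA : A.card = m) :
    ∑ ω ∈ univ.filter (fun ω => Z ω = A), w ω = 1 / ((Fintype.card α).choose m : ℝ) := by
  have hmaps : ∀ ω ∈ univ.filter (fun ω => Z ω = A), U ω ∈ univ.filter (A ⊆ ·) := by
    intro ω hω
    rw [mem_filter, ← (mem_filter.1 hω).2]
    exact ⟨mem_univ _, hZU ω⟩
  have hum : (u.choose m : ℝ) ≠ 0 := Nat.cast_ne_zero.2 (Nat.choose_pos hmu).ne'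
  calc ∑ ω ∈ univ.filter (fun ω => Z ω = A), w ω
      = ∑ V ∈ univ.filter (A ⊆ ·), ∑ ω ∈ univ.filter (fun ω => U ω = V ∧ Z ω = A), w ω := by
        rw [← sum_fiberwise_of_maps_to hmaps]
        simp only [filter_filter, and_comm]
    _ = ∑ V ∈ univ.filter (A ⊆ ·),
          (1 / (u.choose m : ℝ)) * ∑ ω ∈ univ.filter (fun ω => U ω = V), w ω :=
        sum_congr rfl fun V hV => hZunif V A (mem_filter.1 hV).2 hA
    _ = (1 / (u.choose m : ℝ)) * ∑ ω ∈ univ.filter (fun ω => A ⊆ U ω), w ω := by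
        rw [sum_filter_subset_eq_sum_sum_filter_eq w U A, mul_sum]
    _ = 1 / ((Fintype.card α).choose m : ℝ) := by
        rw [sum_filter_subset_eq_choose_div_choose w hun U hUcard hUunif, hA]
        field_simp

lemma sum_mul_prod_indicator_eq_brak_of_two_stage {u m : ℕ} (hmu : m ≤ u)
    (hun : u ≤ Fintype.card α) (U Z : Ω → Finset α) (hUcard : ∀ ω, (U ω).card = u)
    (hUunif : ∀ V : Finset α, V.card = u →
      ∑ ω ∈ univ.filter (fun ω => U ω = V), w ω = 1 / ((Fintype.card α).choose u : ℝ))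
    (hZU : ∀ ω, Z ω ⊆ U ω) (hZcard : ∀ ω, (Z ω).card = m)
    (hZunif : ∀ V A : Finset α, A ⊆ V → A.card = m →
      ∑ ω ∈ univ.filter (fun ω => U ω = V ∧ Z ω = A), w ω =
        (1 / (u.choose m : ℝ)) * ∑ ω ∈ univ.filter (fun ω => U ω = V), w ω)
    (S : Finset α) :
    ∑ ω, w ω * ∏ j ∈ S, (if j ∈ Z ω then (1 : ℝ) else 0) = brak m (Fintype.card α) S.card := by
  have hind : ∀ ω, ∏ j ∈ S, (if j ∈ Z ω then (1 : ℝ) else 0) = if S ⊆ Z ω then 1 else 0 := by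
    intro ω
    simp [prod_boole, subset_iff]
  simp only [hind, mul_ite, mul_one, mul_zero, ← sum_filter]
  rw [sum_filter_subset_eq_choose_div_choose w (hmu.trans hun) Z hZcard
    (sum_filter_eq_one_div_choose_of_two_stage w hmu hun U Z hUcard hUunif hZU hZunif), brak_natCast]

lemma sum_mul_rollout_eq {ι κ : Type*} [Fintype ι] (a : ℝ) (T : Finset ℕ) (h : ℕ → ℝ)
    (F : ι → Finset κ) (c : ι → κ → ℝ) (X : ℕ → κ → Ω → ℝ) :
    ∑ ω, w ω * (a * ∑ t ∈ T, h t * ∑ i, ∑ S ∈ F i, c i S * X t S ω) =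
      a * ∑ i, ∑ S ∈ F i, c i S * ∑ t ∈ T, h t * ∑ ω, w ω * X t S ω := by
  simp only [mul_sum]
  simp_rw [sum_comm (s := (univ : Finset Ω)), sum_comm (s := T)]
  ac_rfl

end RandomSubsets

theorem stmt_9_general (β n : ℕ) (hβ : 1 ≤ β)
    (p q : ℝ) (hp0 : 0 < p) (hpq : p ≤ q)
    (Nbhd : Fin n → Finset (Fin n)) (c : Fin n → Finset (Fin n) → ℝ)
    (u : ℕ) (hu : (u : ℝ) = p * (n : ℝ) / q)
    (m : ℕ → ℕ) (hm : ∀ t, t ≤ β → (m t : ℝ) = (t : ℝ) * p * (n : ℝ) / (β : ℝ))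
    (hmu : m β ≤ u)
    (Ω : Type) [Fintype Ω]
    (w : Ω → ℝ)
    (U : Ω → Finset (Fin n)) (hUcard : ∀ ω, (U ω).card = u)
    (hUunif : ∀ V : Finset (Fin n), V.card = u →
      (∑ ω ∈ Finset.univ.filter (fun ω => U ω = V), w ω) = 1 / (n.choose u : ℝ))
    (Z : ℕ → Ω → Finset (Fin n))
    (hZU : ∀ t, t ≤ β → ∀ ω, Z t ω ⊆ U ω)
    (hZcard : ∀ t, t ≤ β → ∀ ω, (Z t ω).card = m t)
    (hZunif : ∀ t, t ≤ β → ∀ V A : Finset (Fin n), A ⊆ V → A.card = m t →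
      (∑ ω ∈ Finset.univ.filter (fun ω => U ω = V ∧ Z t ω = A), w ω) =
        (1 / (u.choose (m t) : ℝ)) * ∑ ω ∈ Finset.univ.filter (fun ω => U ω = V), w ω) :
    (∑ ω, w ω * ((q / ((n : ℝ) * p)) * ∑ t ∈ Finset.range (β + 1), hcoef β q t *
        ∑ i, ∑ S ∈ (Nbhd i).powerset.filter (fun S => S.card ≤ β),
          c i S * ∏ j ∈ S, (if j ∈ Z t ω then (1 : ℝ) else 0))) -
      (1 / (n : ℝ)) * (∑ i, ∑ S ∈ (Nbhd i).powerset.filter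
          (fun S => S.Nonempty ∧ S.card ≤ β), c i S) =
      (1 / (n : ℝ)) *
        ∑ i, ∑ S ∈ (Nbhd i).powerset.filter (fun S => S.Nonempty ∧ S.card ≤ β),
          c i S * ((q / p) * brak (u : ℝ) (n : ℝ) S.card - 1) := by
  have hun : u ≤ n := by
    have : (u : ℝ) ≤ n := by
      rw [hu, div_le_iff₀ (hp0.trans_le hpq), mul_comm _ q]
      exact mul_le_mul_of_nonneg_right hpq n.cast_nonneg
    exact_mod_cast this
  have hmu' : ∀ t ≤ β, m t ≤ u := fun t ht => by
    have : (m t : ℝ) ≤ m β := by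
      rw [hm t ht, hm β le_rfl]
      gcongr
    exact (Nat.cast_le.1 this).trans hmu
  have hbias : ∀ S : Finset (Fin n), S.card ≤ β →
      ∑ t ∈ range (β + 1), hcoef β q t * ∑ ω, w ω * ∏ j ∈ S, (if j ∈ Z t ω then (1 : ℝ) else 0) =
        brak u n S.card - brak 0 n S.card := by
    intro S hS
    rw [hu, ← sum_hcoef_mul_brak (by omega) hS]
    refine sum_congr rfl fun t ht => ?_
    have ht : t ≤ β := Nat.lt_succ_iff.1 (mem_range.1 ht)
    have hprob := sum_mul_prod_indicator_eq_brak_of_two_stage w (hmu' t ht) (by simpa using hun)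
      U (Z t) hUcard (by simpa using hUunif) (hZU t ht) (hZcard t ht) (hZunif t ht) S
    rw [hprob, Fintype.card_fin, hm t ht, mul_assoc]
  rw [sum_mul_rollout_eq, sum_congr rfl fun i _ => sum_congr rfl fun S hS => by
    rw [hbias S (mem_filter.1 hS).2]]
  simp only [sum_powerset_filter_mul_sub_brak_zero]
  rw [show q / (n * p) = 1 / n * (q / p) by ring, mul_assoc, ← mul_sub]
  simp only [mul_sum, ← sum_sub_distrib, mul_sub, mul_one, mul_left_comm]

/-- bias of the two-stage Unit CRD Rollout Design. Stage 1 draws `U` as a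
uniformly random subset of `[n]` of size `(p/q)n`; Stage 2, conditional on `U`, assigns
each `Z t` to be a uniformly random subset of `U` of size `tpn/β` (units outside `U`
untreated). Then
`E[TTE-hat] − TTE = (1/n) Σ_i Σ_{∅ ≠ S ⊆ N_i, |S| ≤ β} c_{i,S}·((q/p)·[(p/q)n/n]_{|S|} − 1)`. -/
theorem stmt_9 (β n : ℕ) (hβ : 1 ≤ β)
    (p q : ℝ) (hp0 : 0 < p) (hp1 : p ≤ 1) (hpq : p ≤ q) (hq1 : q ≤ 1)
    (Nbhd : Fin n → Finset (Fin n)) (c : Fin n → Finset (Fin n) → ℝ)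
    (u : ℕ) (hu : (u : ℝ) = p * (n : ℝ) / q)
    (m : ℕ → ℕ) (hm : ∀ t, t ≤ β → (m t : ℝ) = (t : ℝ) * p * (n : ℝ) / (β : ℝ))
    (hmu : m β ≤ u)
    (Ω : Type) [Fintype Ω]
    (w : Ω → ℝ) (hw0 : ∀ ω, 0 ≤ w ω) (hw1 : ∑ ω, w ω = 1)
    (U : Ω → Finset (Fin n)) (hUcard : ∀ ω, (U ω).card = u)
    (hUunif : ∀ V : Finset (Fin n), V.card = u →
      (∑ ω ∈ Finset.univ.filter (fun ω => U ω = V), w ω) = 1 / (n.choose u : ℝ))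
    (Z : ℕ → Ω → Finset (Fin n))
    (hZU : ∀ t, t ≤ β → ∀ ω, Z t ω ⊆ U ω)
    (hZcard : ∀ t, t ≤ β → ∀ ω, (Z t ω).card = m t)
    (hZunif : ∀ t, t ≤ β → ∀ V A : Finset (Fin n), A ⊆ V → A.card = m t →
      (∑ ω ∈ Finset.univ.filter (fun ω => U ω = V ∧ Z t ω = A), w ω) =
        (1 / (u.choose (m t) : ℝ)) * ∑ ω ∈ Finset.univ.filter (fun ω => U ω = V), w ω) :
    (∑ ω, w ω * ((q / ((n : ℝ) * p)) * ∑ t ∈ Finset.range (β + 1), hcoef β q t *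
        ∑ i, ∑ S ∈ (Nbhd i).powerset.filter (fun S => S.card ≤ β),
          c i S * ∏ j ∈ S, (if j ∈ Z t ω then (1 : ℝ) else 0))) -
      (1 / (n : ℝ)) * (∑ i, ∑ S ∈ (Nbhd i).powerset.filter
          (fun S => S.Nonempty ∧ S.card ≤ β), c i S) =
      (1 / (n : ℝ)) *
        ∑ i, ∑ S ∈ (Nbhd i).powerset.filter (fun S => S.Nonempty ∧ S.card ≤ β),
          c i S * ((q / p) * brak (u : ℝ) (n : ℝ) S.card - 1) :=
  stmt_9_general β n hβ p q hp0 hpq Nbhd c u hu m hm hmu Ω w U hUcard hUunif Z hZU hZcard hZunif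
end

section
/- Fix integers β ≥ 1, n, n_c ≥ 1 with n_c dividing n, and reals p ∈ (0,1], q ∈ [p,1] such that pn_c/q, pn/q, and tpn/β (for t = 0,…,β) are integers. Let Π partition [n] into n_c clusters each of size n/n_c. Suppose Stage 1 selects a uniformly random set of pn_c/q clusters from Π and lets U be their union (so |U| = pn/q), and Stage 2, conditional on U, assigns each z^t to have its treated set a uniformly random subset of U of size tpn/β (units outside U untreated). Then E[ TTE-hat ] − TTE = (1/n) Σ_{i=1}^{n} Σ_{∅ ≠ S ⊆ N_i, |S| ≤ β} c_{i,S} · ( (q/p)·[ (p/q)n_c / n_c ]_{|Π(S)|} − 1 ), where Π(S) is the set of clusters of Π that intersect S. -/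
open Finset

lemma brak_zero_of_lt (m N : ℕ) (r : ℕ) (h : m < r) : brak (m : ℝ) (N : ℝ) r = 0 := by
  apply Finset.prod_eq_zero (Finset.mem_range.mpr h)
  simp

lemma brak_eq_choose_div (r m N : ℕ) (hrm : r ≤ m) (hmN : m ≤ N) :
    brak (m : ℝ) (N : ℝ) r = ((N - r).choose (m - r) : ℝ) / (N.choose m : ℝ) := by
  induction r with
  | zero =>
    simp [brak, div_self, Nat.cast_ne_zero, Nat.choose_pos hmN, (Nat.choose_pos hmN).ne']
  | succ r ih =>
    have hrm' : r ≤ m := Nat.le_of_succ_le hrm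
    have h1 : r < m := hrm
    have h2 : r < N := lt_of_lt_of_le h1 hmN
    rw [brak, Finset.prod_range_succ, ← brak, ih hrm',
      show N - (r+1) = N - r - 1 from by omega, show m - (r+1) = m - r - 1 from by omega]
    have key : ((N - r - 1).choose (m - r - 1) : ℝ) * ((N : ℝ) - r) =
        ((N - r).choose (m - r) : ℝ) * ((m : ℝ) - r) := by
      have h3 : 1 ≤ m - r := Nat.le_sub_of_add_le (by omega)
      have h4 : N - r = (N - r - 1) + 1 := by omega
      have h5 : m - r = (m - r - 1) + 1 := by omega
      have := Nat.add_one_mul_choose_eq (N - r - 1) (m - r - 1)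
      -- (N-r-1+1) * choose (N-r-1) (m-r-1) = choose (N-r) (m-r) * (m-r)
      have hnat : (N - r) * (N - r - 1).choose (m - r - 1) =
          (N - r).choose (m - r) * (m - r) := by
        rw [h4, h5]; exact_mod_cast this
      have := congrArg (fun x : ℕ => (x : ℝ)) hnat
      push_cast at this
      have hc1 : ((N - r : ℕ) : ℝ) = (N : ℝ) - r := by
        have : r ≤ N := le_of_lt h2; push_cast [this]; ring
      have hc2 : ((m - r : ℕ) : ℝ) = (m : ℝ) - r := by
        have : r ≤ m := hrm'; push_cast [this]; ring
      rw [hc1, hc2] at this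
      linarith [this]
    have hNr : (N : ℝ) - r ≠ 0 := by
      have : (r : ℝ) < N := by exact_mod_cast h2
      linarith
    have hch : ((N.choose m : ℕ) : ℝ) ≠ 0 := by
      exact_mod_cast (Nat.choose_pos hmN).ne'
    field_simp
    nlinarith [key, sq_nonneg ((N:ℝ) - r)]

lemma count_supersets {α : Type*} [DecidableEq α] (X S : Finset α) (hS : S ⊆ X) (k : ℕ)
    (hk : S.card ≤ k) :
    (((X.powersetCard k)).filter (fun A => S ⊆ A)).card = (X.card - S.card).choose (k - S.card) := by
  rw [← card_sdiff_of_subset hS, ← Finset.card_powersetCard (k - S.card) (X \ S)]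
  apply Finset.card_bij' (fun A _ => A \ S) (fun D _ => D ∪ S)
  · intro A hA
    simp only [mem_filter, mem_powersetCard] at hA
    obtain ⟨⟨hAX, hAk⟩, hSA⟩ := hA
    simp only [mem_powersetCard]
    constructor
    · exact sdiff_subset_sdiff hAX (le_refl S)
    · rw [card_sdiff_of_subset hSA, hAk]
  · intro D hD
    simp only [mem_powersetCard] at hD
    obtain ⟨hDX, hDk⟩ := hD
    have hdisj : Disjoint D S := disjoint_of_subset_left hDX (sdiff_disjoint)
    simp only [mem_filter, mem_powersetCard]
    refine ⟨⟨?_, ?_⟩, subset_union_right⟩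
    · exact union_subset (hDX.trans (sdiff_subset)) hS
    · rw [card_union_of_disjoint hdisj, hDk]; omega
  · intro A hA
    simp only [mem_filter, mem_powersetCard] at hA
    exact sdiff_union_of_subset hA.2
  · intro D hD
    simp only [mem_powersetCard] at hD
    have hdisj : Disjoint D S := disjoint_of_subset_left hD.1 (sdiff_disjoint)
    rw [union_sdiff_distrib, sdiff_self]
    simp [sdiff_eq_self_of_disjoint hdisj]

lemma count_supersets_zero {α : Type*} [DecidableEq α] (X S : Finset α) (k : ℕ)
    (hk : k < S.card) :
    (((X.powersetCard k)).filter (fun A => S ⊆ A)).card = 0 := by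
  rw [Finset.card_eq_zero, Finset.filter_eq_empty_iff]
  intro A hA
  rw [mem_powersetCard] at hA
  intro hSA
  have := Finset.card_le_card hSA
  omega

section Lag
open Polynomial



lemma cast_injOn (β : ℕ) : Set.InjOn (fun i : ℕ => (i : ℝ)) (Finset.range (β+1)) :=
  fun a _ b _ h => Nat.cast_injective h

lemma eval_lag_basis (β : ℕ) (t : ℕ) (x : ℝ) :
    (Lagrange.basis (Finset.range (β+1)) (fun i : ℕ => (i : ℝ)) t).eval x =
    ∏ s ∈ (Finset.range (β + 1)).erase t, ((x - (s : ℝ)) / ((t : ℝ) - (s : ℝ))) := by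
  rw [Lagrange.basis, eval_prod]
  apply Finset.prod_congr rfl
  intro j _
  rw [Lagrange.basisDivisor, eval_mul, eval_C, eval_sub, eval_X, eval_C]
  rw [div_eq_mul_inv, mul_comm]

lemma hcoef_sum_eval (β : ℕ) (q : ℝ) (G : ℝ[X]) (hdeg : G.degree < (β + 1 : ℕ)) :
    ∑ t ∈ Finset.range (β + 1), hcoef β q t * G.eval (t : ℝ) =
      G.eval ((β : ℝ) / q) - G.eval 0 := by
  have hvs := cast_injOn β
  have hcard : ((Finset.range (β+1)).card : WithBot ℕ) = ((β+1 : ℕ) : WithBot ℕ) := by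
    rw [Finset.card_range]
  have hdeg' : G.degree < (Finset.range (β+1)).card := by
    rw [Finset.card_range]; exact_mod_cast hdeg
  have hint := Lagrange.eq_interpolate hvs hdeg'
  have h1 : ∀ x : ℝ, G.eval x =
      ∑ t ∈ Finset.range (β+1), G.eval (t : ℝ) *
        (Lagrange.basis (Finset.range (β+1)) (fun i : ℕ => (i : ℝ)) t).eval x := by
    intro x
    conv_lhs => rw [hint]
    rw [Lagrange.interpolate_apply, eval_finset_sum]
    apply Finset.sum_congr rfl
    intro t _
    rw [eval_mul, eval_C]
  rw [h1 ((β:ℝ)/q), h1 0, ← Finset.sum_sub_distrib]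
  apply Finset.sum_congr rfl
  intro t _
  rw [hcoef, eval_lag_basis, eval_lag_basis]
  have : ∀ s : ℕ, ((0:ℝ) - (s:ℝ)) = -(s:ℝ) := by intro s; ring
  simp_rw [this]
  ring

lemma degree_prod_linear_le (r : ℕ) (a b : ℕ → ℝ) (d : ℝ) :
    (∏ i ∈ Finset.range r, (C (a i) * (C d * X - C (b i)))).degree ≤ ((r : ℕ) : WithBot ℕ) := by
  induction r with
  | zero => simp
  | succ r ih =>
    rw [Finset.prod_range_succ]
    refine le_trans (degree_mul_le _ _) ?_
    have h2 : (C (a r) * (C d * X - C (b r))).degree ≤ 1 := by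
      have : C (a r) * (C d * X - C (b r)) = C (a r * d) * X + C (-(a r * b r)) := by
        rw [C_mul, C_neg, C_mul]; ring
      rw [this]; exact degree_linear_le
    have : ((r+1:ℕ) : WithBot ℕ) = ((r:ℕ) : WithBot ℕ) + 1 := by exact_mod_cast rfl
    rw [this]
    exact add_le_add ih h2

lemma sumh_nonempty (β : ℕ) (hβ : 1 ≤ β) (q d K : ℝ) (mv : ℕ → ℝ)
    (hmv : ∀ t, t ≤ β → mv t = (t : ℝ) * d)
    (hdK : d * ((β : ℝ) / q) = K)
    (hKi : ∀ i : ℕ, i < β → K - (i : ℝ) ≠ 0)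
    (r : ℕ) (hr1 : 1 ≤ r) (hrβ : r ≤ β) :
    ∑ t ∈ Finset.range (β + 1), hcoef β q t *
      (∏ i ∈ Finset.range r, (mv t - (i : ℝ)) / (K - (i : ℝ))) = 1 := by
  set G : ℝ[X] := ∏ i ∈ Finset.range r, (C ((K - (i:ℝ))⁻¹) * (C d * X - C (i:ℝ))) with hG
  have hdeg : G.degree < (β + 1 : ℕ) := by
    refine lt_of_le_of_lt (degree_prod_linear_le r _ _ d) ?_
    exact_mod_cast Nat.lt_succ_of_le hrβ
  have heval : ∀ x : ℝ, G.eval x = ∏ i ∈ Finset.range r, (K - (i:ℝ))⁻¹ * (d * x - (i:ℝ)) := by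
    intro x
    rw [hG, eval_prod]
    apply Finset.prod_congr rfl
    intro i _
    simp
  have h1 : ∑ t ∈ Finset.range (β + 1), hcoef β q t *
      (∏ i ∈ Finset.range r, (mv t - (i : ℝ)) / (K - (i : ℝ))) =
      ∑ t ∈ Finset.range (β + 1), hcoef β q t * G.eval (t : ℝ) := by
    apply Finset.sum_congr rfl
    intro t ht
    rw [Finset.mem_range] at ht
    congr 1
    rw [heval]
    apply Finset.prod_congr rfl
    intro i _
    rw [hmv t (Nat.lt_succ_iff.mp ht), div_eq_mul_inv, mul_comm ((t:ℝ)*d - i)]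
    ring_nf
  rw [h1, hcoef_sum_eval β q G hdeg, heval, heval]
  have hK1 : ∏ i ∈ Finset.range r, (K - (i:ℝ))⁻¹ * (d * ((β:ℝ)/q) - (i:ℝ)) = 1 := by
    apply Finset.prod_eq_one
    intro i hi
    rw [Finset.mem_range] at hi
    rw [hdK]
    exact inv_mul_cancel₀ (hKi i (lt_of_lt_of_le hi hrβ))
  have hK0 : ∏ i ∈ Finset.range r, (K - (i:ℝ))⁻¹ * (d * 0 - (i:ℝ)) = 0 := by
    apply Finset.prod_eq_zero (Finset.mem_range.mpr (lt_of_lt_of_le Nat.zero_lt_one hr1))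
    simp
  rw [hK1, hK0, sub_zero]

lemma sumh_empty (β : ℕ) (hβ : 1 ≤ β) (q : ℝ) :
    ∑ t ∈ Finset.range (β + 1), hcoef β q t = 0 := by
  have h := hcoef_sum_eval β q 1 (by
    rw [Polynomial.degree_one]
    exact_mod_cast WithBot.coe_lt_coe.mpr (Nat.succ_pos β) )
  simpa using h

end Lag

lemma card_sup_clusters {n : ℕ} (Cl : Finset (Finset (Fin n))) (s : ℕ)
    (hdisj : ∀ π ∈ Cl, ∀ π' ∈ Cl, π ≠ π' → Disjoint π π')
    (hsize : ∀ π ∈ Cl, π.card = s)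
    (C : Finset (Finset (Fin n))) (hC : C ⊆ Cl) :
    (C.sup id).card = C.card * s := by
  rw [Finset.sup_eq_biUnion]
  have hcb : (C.biUnion id).card = ∑ u ∈ C, (id u).card :=
    Finset.card_biUnion (fun x hx y hy hxy => hdisj x (hC hx) y (hC hy) hxy)
  rw [hcb]
  have : ∀ π ∈ C, (id π).card = s := fun π hπ => hsize π (hC hπ)
  rw [Finset.sum_congr rfl this, Finset.sum_const, smul_eq_mul]

lemma subset_sup_iff {n : ℕ} (Cl : Finset (Finset (Fin n)))
    (hdisj : ∀ π ∈ Cl, ∀ π' ∈ Cl, π ≠ π' → Disjoint π π')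
    (hcover : ∀ i : Fin n, ∃ π ∈ Cl, i ∈ π)
    (C : Finset (Finset (Fin n))) (hC : C ⊆ Cl) (S : Finset (Fin n)) :
    S ⊆ C.sup id ↔ Cl.filter (fun π => (S ∩ π).Nonempty) ⊆ C := by
  constructor
  · intro h π hπ
    rw [mem_filter] at hπ
    obtain ⟨hπCl, j, hj⟩ := hπ
    rw [mem_inter] at hj
    have hjU : j ∈ C.sup id := h hj.1
    rw [Finset.mem_sup] at hjU
    obtain ⟨π', hπ'C, hjπ'⟩ := hjU
    have : π = π' := by
      by_contra hne
      have := (hdisj π hπCl π' (hC hπ'C) hne).le_bot (mem_inter.mpr ⟨hj.2, hjπ'⟩)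
      simp at this
    rwa [this]
  · intro h j hj
    obtain ⟨π, hπCl, hjπ⟩ := hcover j
    have hπ : π ∈ Cl.filter (fun π => (S ∩ π).Nonempty) :=
      mem_filter.mpr ⟨hπCl, ⟨j, mem_inter.mpr ⟨hj, hjπ⟩⟩⟩
    exact Finset.mem_sup.mpr ⟨π, h hπ, hjπ⟩

lemma probB {n : ℕ} {Ω : Type} [Fintype Ω]
    (Cl : Finset (Finset (Fin n))) (n_c s kc : ℕ)
    (hClcard : Cl.card = n_c)
    (hdisj : ∀ π ∈ Cl, ∀ π' ∈ Cl, π ≠ π' → Disjoint π π')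
    (hcover : ∀ i : Fin n, ∃ π ∈ Cl, i ∈ π)
    (hsize : ∀ π ∈ Cl, π.card = s)
    (hkn : kc ≤ n_c)
    (w : Ω → ℝ)
    (Csel : Ω → Finset (Finset (Fin n)))
    (hCsub : ∀ ω, Csel ω ⊆ Cl) (hCcard : ∀ ω, (Csel ω).card = kc)
    (hCunif : ∀ C : Finset (Finset (Fin n)), C ⊆ Cl → C.card = kc →
      (∑ ω ∈ Finset.univ.filter (fun ω => Csel ω = C), w ω) = 1 / (n_c.choose kc : ℝ))
    (mt : ℕ) (hmtK : mt ≤ kc * s)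
    (ZT : Ω → Finset (Fin n))
    (hZU : ∀ ω, ZT ω ⊆ (Csel ω).sup id)
    (hZcard : ∀ ω, (ZT ω).card = mt)
    (hZunif : ∀ C : Finset (Finset (Fin n)), C ⊆ Cl → C.card = kc →
      ∀ A : Finset (Fin n), A ⊆ C.sup id → A.card = mt →
      (∑ ω ∈ Finset.univ.filter (fun ω => Csel ω = C ∧ ZT ω = A), w ω) =
        (1 / ((kc * s).choose mt : ℝ)) *
          ∑ ω ∈ Finset.univ.filter (fun ω => Csel ω = C), w ω)
    (S : Finset (Fin n)) :
    (∑ ω, w ω * (if S ⊆ ZT ω then (1 : ℝ) else 0)) =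
      brak (mt : ℝ) ((kc * s : ℕ) : ℝ) S.card *
        brak (kc : ℝ) (n_c : ℝ) ((Cl.filter (fun π => (S ∩ π).Nonempty)).card) := by
  classical
  set R := Cl.filter (fun π => (S ∩ π).Nonempty) with hRdef
  have hRCl : R ⊆ Cl := filter_subset _ _
  set K := kc * s with hKdef
  set ANat : ℕ := if S.card ≤ mt then (K - S.card).choose (mt - S.card) else 0 with hAdef
  set CNat : ℕ := if R.card ≤ kc then (n_c - R.card).choose (kc - R.card) else 0 with hCNdef
  have hmaps : ∀ ω ∈ (univ : Finset Ω), Csel ω ∈ Cl.powersetCard kc :=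
    fun ω _ => mem_powersetCard.mpr ⟨hCsub ω, hCcard ω⟩
  rw [← Finset.sum_fiberwise_of_maps_to hmaps (fun ω => w ω * (if S ⊆ ZT ω then (1:ℝ) else 0))]
  have hinner : ∀ C ∈ Cl.powersetCard kc,
      (∑ ω ∈ univ.filter (fun ω => Csel ω = C), w ω * (if S ⊆ ZT ω then (1:ℝ) else 0)) =
      (if R ⊆ C then (ANat : ℝ) / (K.choose mt : ℝ) * (1 / (n_c.choose kc : ℝ)) else 0) := by
    intro C hC
    rw [mem_powersetCard] at hC
    obtain ⟨hCCl, hCk⟩ := hC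
    by_cases hRC : R ⊆ C
    · rw [if_pos hRC]
      have hSU : S ⊆ C.sup id := (subset_sup_iff Cl hdisj hcover C hCCl S).mpr hRC
      have hUcard : (C.sup id).card = K := by
        rw [card_sup_clusters Cl s hdisj hsize C hCCl, hCk]
      have hmaps2 : ∀ ω ∈ univ.filter (fun ω => Csel ω = C),
          ZT ω ∈ (C.sup id).powersetCard mt := by
        intro ω hω
        rw [mem_filter] at hω
        refine mem_powersetCard.mpr ⟨?_, hZcard ω⟩
        have := hZU ω
        rwa [hω.2] at this
      rw [← Finset.sum_fiberwise_of_maps_to hmaps2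
        (fun ω => w ω * (if S ⊆ ZT ω then (1:ℝ) else 0))]
      have hfib : ∀ A ∈ (C.sup id).powersetCard mt,
          (∑ ω ∈ (univ.filter (fun ω => Csel ω = C)).filter (fun ω => ZT ω = A),
            w ω * (if S ⊆ ZT ω then (1:ℝ) else 0)) =
          (if S ⊆ A then (1:ℝ) else 0) * ((1 / (K.choose mt : ℝ)) * (1 / (n_c.choose kc : ℝ))) := by
        intro A hA
        rw [mem_powersetCard] at hA
        have h1 : ∀ ω ∈ (univ.filter (fun ω => Csel ω = C)).filter (fun ω => ZT ω = A),
            w ω * (if S ⊆ ZT ω then (1:ℝ) else 0) = (if S ⊆ A then (1:ℝ) else 0) * w ω := by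
          intro ω hω
          rw [filter_filter, mem_filter] at hω
          rw [hω.2.2, mul_comm]
        rw [Finset.sum_congr rfl h1, ← Finset.mul_sum, filter_filter]
        rw [hZunif C hCCl hCk A hA.1 hA.2, hCunif C hCCl hCk]
      rw [Finset.sum_congr rfl hfib, ← Finset.sum_mul]
      have hcount : (∑ A ∈ (C.sup id).powersetCard mt, (if S ⊆ A then (1:ℝ) else 0)) =
          (ANat : ℝ) := by
        rw [← Finset.sum_filter]
        simp only [Finset.sum_const, nsmul_eq_mul, mul_one]
        by_cases hSm : S.card ≤ mt
        · rw [count_supersets (C.sup id) S hSU mt hSm, hUcard, hAdef, if_pos hSm]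
        · rw [count_supersets_zero (C.sup id) S mt (by omega), hAdef, if_neg hSm]
      rw [hcount]
      ring
    · rw [if_neg hRC]
      apply Finset.sum_eq_zero
      intro ω hω
      rw [mem_filter] at hω
      have hZC : ZT ω ⊆ C.sup id := by
        have := hZU ω; rwa [hω.2] at this
      have : ¬ S ⊆ ZT ω := by
        intro hSZ
        exact hRC ((subset_sup_iff Cl hdisj hcover C hCCl S).mp (hSZ.trans hZC))
      rw [if_neg this, mul_zero]
  rw [Finset.sum_congr rfl hinner, ← Finset.sum_filter]
  simp only [Finset.sum_const, nsmul_eq_mul, mul_one]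
  have hCcount : ((Cl.powersetCard kc).filter (fun C => R ⊆ C)).card = CNat := by
    by_cases hRk : R.card ≤ kc
    · rw [count_supersets Cl R hRCl kc hRk, hClcard, hCNdef, if_pos hRk]
    · rw [count_supersets_zero Cl R kc (by omega), hCNdef, if_neg hRk]
  rw [hCcount]
  have hA : (ANat : ℝ) / (K.choose mt : ℝ) = brak (mt : ℝ) (K : ℝ) S.card := by
    by_cases hSm : S.card ≤ mt
    · rw [hAdef, if_pos hSm, brak_eq_choose_div S.card mt K hSm hmtK]
    · rw [hAdef, if_neg hSm, brak_zero_of_lt mt K S.card (by omega)]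
      simp
  have hC : (CNat : ℝ) / (n_c.choose kc : ℝ) = brak (kc : ℝ) (n_c : ℝ) R.card := by
    by_cases hRk : R.card ≤ kc
    · rw [hCNdef, if_pos hRk, brak_eq_choose_div R.card kc n_c hRk hkn]
    · rw [hCNdef, if_neg hRk, brak_zero_of_lt kc n_c R.card (by omega)]
      simp
  have hmK : ((kc * s : ℕ) : ℝ) = (K : ℝ) := by rw [hKdef]
  rw [hmK, ← hA, ← hC]
  have hch : ((n_c.choose kc : ℕ) : ℝ) ≠ 0 := by
    exact_mod_cast (Nat.choose_pos hkn).ne'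
  field_simp
lemma mul_sum_swap {κ ι : Type*} (sk : Finset κ) (s : Finset ι) (w : κ → ℝ) (g : κ → ι → ℝ) :
    (∑ k ∈ sk, w k * ∑ i ∈ s, g k i) = ∑ i ∈ s, ∑ k ∈ sk, w k * g k i := by
  simp_rw [Finset.mul_sum]; rw [Finset.sum_comm]

lemma prod_ind {α : Type*} [DecidableEq α] (S T : Finset α) :
    (∏ j ∈ S, if j ∈ T then (1:ℝ) else 0) = if S ⊆ T then (1:ℝ) else 0 := by
  rw [Finset.prod_boole]
  refine if_congr ?_ rfl rfl
  constructor
  · intro h a ha; exact h a ha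
  · intro h a ha; exact h ha

/-- bias of the two-stage Clustered CRD Rollout Design. `Cl` partitions
`[n]` into `n_c` clusters of size `n/n_c`. Stage 1 selects a uniformly random set `Csel`
of `pn_c/q` clusters; `U` is their union (so `|U| = pn/q`). Stage 2, conditional on `U`,
assigns each `Z t` to be a uniformly random subset of `U` of size `tpn/β` (units outside
`U` untreated). Then `E[TTE-hat] − TTE =
(1/n) Σ_i Σ_{∅ ≠ S ⊆ N_i, |S| ≤ β} c_{i,S}·((q/p)·[(p/q)n_c/n_c]_{|Π(S)|} − 1)`,
where `Π(S)` is the set of clusters intersecting `S`. -/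
theorem stmt_10 (β n n_c s : ℕ) (hβ : 1 ≤ β) (hnc : 1 ≤ n_c) (hns : n = n_c * s)
    (p q : ℝ) (hp0 : 0 < p) (hp1 : p ≤ 1) (hpq : p ≤ q) (hq1 : q ≤ 1)
    (Cl : Finset (Finset (Fin n))) (hClcard : Cl.card = n_c)
    (hdisj : ∀ π ∈ Cl, ∀ π' ∈ Cl, π ≠ π' → Disjoint π π')
    (hcover : ∀ i : Fin n, ∃ π ∈ Cl, i ∈ π)
    (hsize : ∀ π ∈ Cl, π.card = s)
    (Nbhd : Fin n → Finset (Fin n)) (c : Fin n → Finset (Fin n) → ℝ)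
    (kc : ℕ) (hkc : (kc : ℝ) = p * (n_c : ℝ) / q)
    (m : ℕ → ℕ) (hm : ∀ t, t ≤ β → (m t : ℝ) = (t : ℝ) * p * (n : ℝ) / (β : ℝ))
    (hmu : m β ≤ kc * s)
    (Ω : Type) [Fintype Ω]
    (w : Ω → ℝ) (hw0 : ∀ ω, 0 ≤ w ω) (hw1 : ∑ ω, w ω = 1)
    (Csel : Ω → Finset (Finset (Fin n)))
    (hCsub : ∀ ω, Csel ω ⊆ Cl) (hCcard : ∀ ω, (Csel ω).card = kc)
    (hCunif : ∀ C : Finset (Finset (Fin n)), C ⊆ Cl → C.card = kc →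
      (∑ ω ∈ Finset.univ.filter (fun ω => Csel ω = C), w ω) = 1 / (n_c.choose kc : ℝ))
    (Z : ℕ → Ω → Finset (Fin n))
    (hZU : ∀ t, t ≤ β → ∀ ω, Z t ω ⊆ (Csel ω).sup id)
    (hZcard : ∀ t, t ≤ β → ∀ ω, (Z t ω).card = m t)
    (hZunif : ∀ t, t ≤ β → ∀ C : Finset (Finset (Fin n)), C ⊆ Cl → C.card = kc →
      ∀ A : Finset (Fin n), A ⊆ C.sup id → A.card = m t →
      (∑ ω ∈ Finset.univ.filter (fun ω => Csel ω = C ∧ Z t ω = A), w ω) =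
        (1 / ((kc * s).choose (m t) : ℝ)) *
          ∑ ω ∈ Finset.univ.filter (fun ω => Csel ω = C), w ω) :
    (∑ ω, w ω * ((q / ((n : ℝ) * p)) * ∑ t ∈ Finset.range (β + 1), hcoef β q t *
        ∑ i, ∑ S ∈ (Nbhd i).powerset.filter (fun S => S.card ≤ β),
          c i S * ∏ j ∈ S, (if j ∈ Z t ω then (1 : ℝ) else 0))) -
      (1 / (n : ℝ)) * (∑ i, ∑ S ∈ (Nbhd i).powerset.filter
          (fun S => S.Nonempty ∧ S.card ≤ β), c i S) =
      (1 / (n : ℝ)) *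
        ∑ i, ∑ S ∈ (Nbhd i).powerset.filter (fun S => S.Nonempty ∧ S.card ≤ β),
          c i S * ((q / p) *
            brak (kc : ℝ) (n_c : ℝ) ((Cl.filter (fun π => (S ∩ π).Nonempty)).card) - 1) := by
  classical
  rcases Nat.eq_zero_or_pos n with hn0 | hn
  · subst hn0
    simp
  -- main case
  have hq0 : (0:ℝ) < q := lt_of_lt_of_le hp0 hpq
  have hnR : (0:ℝ) < (n:ℝ) := by exact_mod_cast hn
  have hβR : (0:ℝ) < (β:ℝ) := by exact_mod_cast hβ
  have hncR : (0:ℝ) < (n_c:ℝ) := by exact_mod_cast hnc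
  have hkn : kc ≤ n_c := by
    have h : (kc:ℝ) ≤ (n_c:ℝ) := by
      rw [hkc, div_le_iff₀ hq0]
      nlinarith
    exact_mod_cast h
  have hΩ : (Finset.univ : Finset Ω).Nonempty := by
    by_contra h
    rw [Finset.not_nonempty_iff_eq_empty] at h
    rw [h, Finset.sum_empty] at hw1
    exact one_ne_zero hw1.symm
  obtain ⟨ω0, -⟩ := hΩ
  have hmtK : ∀ t, t ≤ β → m t ≤ kc * s := by
    intro t ht
    have h1 : (Z t ω0).card ≤ ((Csel ω0).sup id).card :=
      Finset.card_le_card (hZU t ht ω0)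
    rw [hZcard t ht ω0, card_sup_clusters Cl s hdisj hsize (Csel ω0) (hCsub ω0),
      hCcard ω0] at h1
    exact h1
  have hB : ∀ t, t ≤ β → ∀ S : Finset (Fin n),
      (∑ ω, w ω * (if S ⊆ Z t ω then (1:ℝ) else 0)) =
      brak ((m t : ℕ) : ℝ) ((kc * s : ℕ) : ℝ) S.card *
        brak (kc : ℝ) (n_c : ℝ) ((Cl.filter (fun π => (S ∩ π).Nonempty)).card) :=
    fun t ht S => probB Cl n_c s kc hClcard hdisj hcover hsize hkn w Csel hCsub hCcard
      hCunif (m t) (hmtK t ht) (Z t) (hZU t ht) (hZcard t ht) (hZunif t ht) S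
  -- real facts
  have hnse : (n:ℝ) = (n_c:ℝ) * (s:ℝ) := by exact_mod_cast congrArg (Nat.cast (R := ℝ)) hns
  have hKR : ((kc * s : ℕ) : ℝ) = p * n / q := by
    push_cast
    rw [hkc, hnse]
    field_simp
  have hmd : ∀ t, t ≤ β → ((m t : ℕ):ℝ) = (t:ℝ) * (p * n / β) := by
    intro t ht; rw [hm t ht]; ring
  have hdK : (p * (n:ℝ) / β) * ((β:ℝ)/q) = p * n / q := by
    field_simp
  have hpn : (β:ℝ) ≤ p * n := by
    have h1 : (m 1 : ℝ) = p * n / β := by rw [hm 1 hβ]; ring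
    have h2 : (0:ℝ) < p * (n:ℝ) / β := by positivity
    have h3 : m 1 ≠ 0 := by
      intro h
      rw [h] at h1
      simp only [Nat.cast_zero] at h1
      rw [← h1] at h2
      exact lt_irrefl 0 h2
    have h4 : (1:ℝ) ≤ (m 1 : ℝ) := by exact_mod_cast Nat.one_le_iff_ne_zero.mpr h3
    rw [h1, le_div_iff₀ hβR] at h4
    linarith
  have hKβ : (β:ℝ) ≤ p * n / q := by
    rw [le_div_iff₀ hq0]
    nlinarith
  have hKi : ∀ i : ℕ, i < β → p * (n:ℝ) / q - (i:ℝ) ≠ 0 := by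
    intro i hi
    have h1 : (i:ℝ) < (β:ℝ) := by exact_mod_cast hi
    have h2 : (i:ℝ) < p * n / q := lt_of_lt_of_le h1 hKβ
    intro h
    linarith
  have hsum1 : ∀ r, 1 ≤ r → r ≤ β →
      (∑ t ∈ Finset.range (β+1), hcoef β q t * brak ((m t : ℕ):ℝ) ((kc*s : ℕ):ℝ) r) = 1 := by
    intro r h1 h2
    simp only [brak, hKR]
    exact sumh_nonempty β hβ q (p*n/β) (p*n/q) (fun t => ((m t : ℕ):ℝ)) hmd hdK hKi r h1 h2
  have hsum0 : (∑ t ∈ Finset.range (β+1), hcoef β q t) = 0 := sumh_empty β hβ q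
  set P1 : Finset (Fin n) → ℝ :=
    fun S => brak (kc : ℝ) (n_c : ℝ) ((Cl.filter (fun π => (S ∩ π).Nonempty)).card) with hP1
  set bA : ℕ → Finset (Fin n) → ℝ :=
    fun t S => brak ((m t : ℕ) : ℝ) ((kc * s : ℕ) : ℝ) S.card with hbA
  set F : Fin n → Finset (Finset (Fin n)) :=
    fun i => (Nbhd i).powerset.filter (fun S => S.card ≤ β) with hF
  set G : Fin n → Finset (Finset (Fin n)) :=
    fun i => (Nbhd i).powerset.filter (fun S => S.Nonempty ∧ S.card ≤ β) with hG
  -- step over ω for fixed t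
  have main1 : ∀ t, t ≤ β →
      (∑ ω, w ω * ∑ i, ∑ S ∈ F i, c i S * (if S ⊆ Z t ω then (1:ℝ) else 0)) =
      ∑ i, ∑ S ∈ F i, c i S * (bA t S * P1 S) := by
    intro t ht
    rw [mul_sum_swap Finset.univ Finset.univ w
      (fun ω i => ∑ S ∈ F i, c i S * (if S ⊆ Z t ω then (1:ℝ) else 0))]
    apply Finset.sum_congr rfl
    intro i _
    rw [mul_sum_swap Finset.univ (F i) w
      (fun ω S => c i S * (if S ⊆ Z t ω then (1:ℝ) else 0))]
    apply Finset.sum_congr rfl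
    intro S _
    have h1 : ∀ ω : Ω, w ω * (c i S * (if S ⊆ Z t ω then (1:ℝ) else 0)) =
        c i S * (w ω * (if S ⊆ Z t ω then (1:ℝ) else 0)) := fun ω => by ring
    rw [Finset.sum_congr rfl (fun ω _ => h1 ω), ← Finset.mul_sum, hB t ht S]
  -- expectation term
  have main2 : (∑ ω, w ω * ((q / ((n : ℝ) * p)) * ∑ t ∈ Finset.range (β + 1), hcoef β q t *
        ∑ i, ∑ S ∈ (Nbhd i).powerset.filter (fun S => S.card ≤ β),
          c i S * ∏ j ∈ S, (if j ∈ Z t ω then (1 : ℝ) else 0))) =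
      (q / ((n : ℝ) * p)) * ∑ t ∈ Finset.range (β + 1), hcoef β q t *
        ∑ i, ∑ S ∈ F i, c i S * (bA t S * P1 S) := by
    simp only [prod_ind]
    have h1 : ∀ ω : Ω, w ω * ((q / ((n : ℝ) * p)) * ∑ t ∈ Finset.range (β + 1), hcoef β q t *
        ∑ i, ∑ S ∈ F i, c i S * (if S ⊆ Z t ω then (1:ℝ) else 0)) =
        (q / ((n : ℝ) * p)) * (w ω * ∑ t ∈ Finset.range (β + 1), hcoef β q t *
        ∑ i, ∑ S ∈ F i, c i S * (if S ⊆ Z t ω then (1:ℝ) else 0)) := fun ω => by ring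
    rw [Finset.sum_congr rfl (fun ω _ => h1 ω), ← Finset.mul_sum]
    congr 1
    have h2 : ∀ ω : Ω, w ω * (∑ t ∈ Finset.range (β + 1), hcoef β q t *
        ∑ i, ∑ S ∈ F i, c i S * (if S ⊆ Z t ω then (1:ℝ) else 0)) =
        w ω * (∑ t ∈ Finset.range (β + 1), hcoef β q t *
        ∑ i, ∑ S ∈ F i, c i S * (if S ⊆ Z t ω then (1:ℝ) else 0)) := fun ω => rfl
    rw [mul_sum_swap Finset.univ (Finset.range (β+1)) w
      (fun ω t => hcoef β q t * ∑ i, ∑ S ∈ F i, c i S * (if S ⊆ Z t ω then (1:ℝ) else 0))]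
    apply Finset.sum_congr rfl
    intro t ht
    rw [Finset.mem_range] at ht
    have ht' : t ≤ β := by omega
    have h3 : ∀ ω : Ω, w ω * (hcoef β q t *
        ∑ i, ∑ S ∈ F i, c i S * (if S ⊆ Z t ω then (1:ℝ) else 0)) =
        hcoef β q t * (w ω *
        ∑ i, ∑ S ∈ F i, c i S * (if S ⊆ Z t ω then (1:ℝ) else 0)) := fun ω => by ring
    rw [Finset.sum_congr rfl (fun ω _ => h3 ω), ← Finset.mul_sum, main1 t ht']
  rw [main2]
  -- swap t inside
  have main3 : (∑ t ∈ Finset.range (β + 1), hcoef β q t *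
        ∑ i, ∑ S ∈ F i, c i S * (bA t S * P1 S)) =
      ∑ i, ∑ S ∈ F i, (c i S * P1 S) * (∑ t ∈ Finset.range (β+1), hcoef β q t * bA t S) := by
    rw [mul_sum_swap (Finset.range (β+1)) Finset.univ (fun t => hcoef β q t)
      (fun t i => ∑ S ∈ F i, c i S * (bA t S * P1 S))]
    apply Finset.sum_congr rfl
    intro i _
    rw [mul_sum_swap (Finset.range (β+1)) (F i) (fun t => hcoef β q t)
      (fun t S => c i S * (bA t S * P1 S))]
    apply Finset.sum_congr rfl
    intro S _
    rw [Finset.mul_sum]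
    apply Finset.sum_congr rfl
    intro t _
    ring
  rw [main3]
  -- evaluate inner t-sum
  have main4 : ∀ i : Fin n, ∀ S ∈ F i,
      (∑ t ∈ Finset.range (β+1), hcoef β q t * bA t S) =
      (if S.Nonempty then (1:ℝ) else 0) := by
    intro i S hS
    rw [hF] at hS
    simp only [Finset.mem_filter, Finset.mem_powerset] at hS
    by_cases hSne : S.Nonempty
    · rw [if_pos hSne]
      exact hsum1 S.card (Finset.card_pos.mpr hSne) hS.2
    · rw [if_neg hSne]
      rw [Finset.not_nonempty_iff_eq_empty] at hSne
      subst hSne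
      have : ∀ t ∈ Finset.range (β+1), hcoef β q t * bA t ∅ = hcoef β q t := by
        intro t _
        rw [hbA]
        simp [brak]
      rw [Finset.sum_congr rfl this, hsum0]
  have main5 : ∀ i : Fin n,
      (∑ S ∈ F i, (c i S * P1 S) * (∑ t ∈ Finset.range (β+1), hcoef β q t * bA t S)) =
      ∑ S ∈ G i, c i S * P1 S := by
    intro i
    rw [Finset.sum_congr rfl (fun S hS => by rw [main4 i S hS])]
    simp only [mul_ite, mul_one, mul_zero]
    rw [← Finset.sum_filter]
    congr 1
    rw [hF, hG, Finset.filter_filter]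
    apply Finset.filter_congr
    intro S _
    simp only [and_comm]
  rw [Finset.sum_congr rfl (fun i _ => main5 i)]
  -- final algebra
  have hfin : ∀ i : Fin n, (∑ S ∈ G i, c i S * ((q / p) * P1 S - 1)) =
      (q/p) * (∑ S ∈ G i, c i S * P1 S) - ∑ S ∈ G i, c i S := by
    intro i
    rw [Finset.mul_sum, ← Finset.sum_sub_distrib]
    apply Finset.sum_congr rfl
    intro S _
    ring
  rw [Finset.sum_congr rfl (fun i _ => hfin i), Finset.sum_sub_distrib, ← Finset.mul_sum]
  have hc0 : q / ((n:ℝ) * p) = (1/(n:ℝ)) * (q/p) := by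
    field_simp
  rw [hc0]
  ring
end
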